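/- Let R = GF(2)[c]/(c³) and let S = R[[d]] be the formal power series ring over R. Then 1 + c + c² + d is a unit in S, and for every natural number i the coefficient of d^i in (1 + c + c² + d)^{-1} equals: 1 + c if i ≡ 0 (mod 4); 1 + c² if i ≡ 1 (mod 4); 1 + c + c² if i ≡ 2 (mod 4); and 1 if i ≡ 3 (mod 4). -/

import Mathlib

/-! Over `GF(2)` we have `(1 + c)(1 + c + c²) = 1 + c³ = 1` and `d = -d`, so
`1 + c + c² + d = u - d` with `u⁻¹ = 1 + c`. Its inverse is the geometric series
`∑ u⁻ⁱ⁻¹ dⁱ = ∑ (1 + c)ⁱ⁺¹ dⁱ`, and the coefficients have period 4 because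
`(1 + c)⁴ = 1 + c⁴ = 1` by the Frobenius. -/

open Polynomial PowerSeries

noncomputable section

/-- The ring `R = GF(2)[c] / (c³)`. -/
abbrev R2 : Type := AdjoinRoot (Polynomial.X ^ 3 : Polynomial (ZMod 2))

/-- The class of the variable `c` in `R = GF(2)[c] / (c³)`. -/
def cR : R2 := AdjoinRoot.root _

/-- The power series ring `S = R[[d]]`. -/
abbrev S2 : Type := PowerSeries R2

/-- The image of `c` in `S = R[[d]]`. -/
def cS : S2 := PowerSeries.C cR

/-- The variable `d` of `S = R[[d]]`. -/
def dS : S2 := PowerSeries.X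

/-- The coefficient of `c²` of an element of `R = GF(2)[c] / (c³)`,
computed via the unique representative polynomial of degree `< 3`. -/
def coefc2 (x : R2) : ZMod 2 :=
  (AdjoinRoot.modByMonicHom (Polynomial.monic_X_pow 3) x).coeff 2

lemma cR_pow_three : cR ^ 3 = 0 := by
  have := AdjoinRoot.isRoot_root (Polynomial.X ^ 3 : (ZMod 2)[X])
  simpa [Polynomial.IsRoot, cR] using this

instance : CharP R2 2 :=
  have : Nontrivial R2 := AdjoinRoot.nontrivial _ (by simp)
  charP_of_injective_algebraMap (algebraMap (ZMod 2) R2).injective 2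

lemma one_add_cR_mul_one_add_cR_add_sq : (1 + cR) * (1 + cR + cR ^ 2) = 1 := by
  linear_combination (cR + cR ^ 2) * CharTwo.two_eq_zero (R := R2) + cR_pow_three

lemma one_add_cR_pow_four : (1 + cR) ^ 4 = 1 := by
  rw [show 4 = 2 ^ 2 by rfl, add_pow_char_pow (1 : R2) cR 2 2, one_pow,
    show cR ^ 2 ^ 2 = cR * cR ^ 3 by ring, cR_pow_three, mul_zero, add_zero]

lemma one_add_cR_pow_succ (i : ℕ) :
    (1 + cR) ^ (i + 1) =
      if i % 4 = 0 then 1 + cR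
      else if i % 4 = 1 then 1 + cR ^ 2
      else if i % 4 = 2 then 1 + cR + cR ^ 2
      else 1 := by
  rw [pow_eq_pow_mod _ one_add_cR_pow_four]
  have two : (2 : R2) = 0 := CharTwo.two_eq_zero
  obtain h | h | h | h : i % 4 = 0 ∨ i % 4 = 1 ∨ i % 4 = 2 ∨ i % 4 = 3 := by omega
  all_goals simp only [h, Nat.add_mod i 1 4]; norm_num
  · linear_combination cR * two
  · linear_combination (cR + cR ^ 2) * two + cR_pow_three

namespace PowerSeries

variable {R : Type*} [CommRing R]

def unitCSubX (u : Rˣ) : R⟦X⟧ˣ where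
  val := C (u : R) - X
  inv := invUnitsSub u
  val_inv := by rw [mul_comm, invUnitsSub_mul_sub]
  inv_val := invUnitsSub_mul_sub u

lemma isUnit_C_sub_X (u : Rˣ) : IsUnit (C (u : R) - X) := (unitCSubX u).isUnit

lemma inverse_C_sub_X (u : Rˣ) : Ring.inverse (C (u : R) - X) = invUnitsSub u :=
  Ring.inverse_unit (unitCSubX u)

end PowerSeries

def unitOneAddCRAddSq : R2ˣ where
  val := 1 + cR + cR ^ 2
  inv := 1 + cR
  val_inv := by rw [mul_comm, one_add_cR_mul_one_add_cR_add_sq]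
  inv_val := one_add_cR_mul_one_add_cR_add_sq

lemma eq_C_sub_X :
    (1 : S2) + cS + cS ^ 2 + dS = PowerSeries.C (unitOneAddCRAddSq : R2) - PowerSeries.X := by
  have two : (2 : S2) = 0 := by
    rw [← map_ofNat (PowerSeries.C (R := R2)) 2, CharTwo.two_eq_zero (R := R2), map_zero]
  simp only [unitOneAddCRAddSq, cS, dS, map_add, map_one, map_pow]
  linear_combination PowerSeries.X * two

theorem inverse_coeffs :
    IsUnit (1 + cS + cS ^ 2 + dS) ∧
      ∀ i : ℕ,
        PowerSeries.coeff i (Ring.inverse (1 + cS + cS ^ 2 + dS)) =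
          if i % 4 = 0 then 1 + cR
          else if i % 4 = 1 then 1 + cR ^ 2
          else if i % 4 = 2 then 1 + cR + cR ^ 2
          else 1 := by
  rw [eq_C_sub_X]
  refine ⟨PowerSeries.isUnit_C_sub_X _, fun i => ?_⟩
  rw [PowerSeries.inverse_C_sub_X, coeff_invUnitsSub, one_divp, ← inv_pow,
    Units.val_pow_eq_pow_val]
  exact one_add_cR_pow_succ i

end
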